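/- arXiv:math/0206101 — 7 statements merged into one kernel-verified Lean document; each statement's English description precedes it below -/
import Mathlib

section
/- Let K be a field and let R be a commutative Noetherian local domain which is a K-algebra such that the composite K → R → R/m is an isomorphism (so the residue field of R is K), and such that R is regular of Krull dimension 1 (i.e. R is a discrete valuation ring). Let G be a finite subgroup of the group of K-algebra automorphisms of R. Then there exists a group homomorphism f : G → Kˣ such that for every σ ∈ G and every v ∈ m one has σ(v) − (algebraMap K R (f σ)) · v ∈ m², and such that: if char K = 0 then f is injective, and if char K = p > 0 then every element of the kernel of f has order a power of p. -/
/-!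
A `K`-automorphism `σ` acts on the line `m/m²` by a scalar `c(σ)`, read off from a uniformizer
`t` via `σ t ≡ c(σ) t (mod m²)`, and `c` is multiplicative. If `c(σ) = 1`, then `δ = σ - 1`
raises the `m`-adic filtration by one, and once `δ(R) ⊆ m^j` we get `σ^n ≡ 1 + nδ (mod m^(j+1))`.
Hence if `σ^n = 1` with `n` invertible in `K`, `δ(R)` lies in every power of `m`, which is zero by
Krull's intersection theorem. Applied to the prime-to-`char K` part of `σ`, this gives
injectivity in characteristic `0` and `p`-power orders on the kernel in characteristic `p`.
-/

open IsLocalRing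

section Rigidity

variable {R : Type*} [CommRing R] {I : Ideal R} {φ : R →+* R}

theorem map_sub_self_mem_pow_succ (h0 : ∀ x, φ x - x ∈ I) (h1 : ∀ x ∈ I, φ x - x ∈ I ^ 2)
    (a : ℕ) : ∀ x ∈ I ^ a, φ x - x ∈ I ^ (a + 1) := by
  have hφI : ∀ y ∈ I, φ y ∈ I := fun y hy ↦ by
    simpa using I.add_mem hy (Ideal.pow_le_self two_ne_zero (h1 y hy))
  induction a with
  | zero => exact fun x _ ↦ by simpa using h0 x
  | succ a ih =>
    intro x hx
    rw [pow_succ] at hx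
    refine Submodule.mul_induction_on hx (fun y hy z hz ↦ ?_) (fun y z hy hz ↦ ?_)
    · have hφyz : φ (y * z) - y * z = (φ y - y) * φ z + y * (φ z - z) := by
        rw [map_mul]; ring
      rw [hφyz]
      refine add_mem ?_ ?_
      · rw [pow_succ]; exact Ideal.mul_mem_mul (ih y hy) (hφI z hz)
      · rw [add_assoc, pow_add]; exact Ideal.mul_mem_mul hy (h1 z hz)
    · simpa [map_add, add_sub_add_comm] using add_mem hy hz

theorem iterate_sub_self_sub_mul_mem_pow_succ {j : ℕ} (hj : ∀ x, φ x - x ∈ I ^ j)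
    (hjs : ∀ x ∈ I ^ j, φ x - x ∈ I ^ (j + 1)) (x : R) (k : ℕ) :
    φ^[k] x - x - k * (φ x - x) ∈ I ^ (j + 1) := by
  induction k with
  | zero => simp
  | succ k ih =>
    have hk : φ^[k] x - x ∈ I ^ j := by
      simpa using add_mem (Ideal.pow_le_pow_right j.le_succ ih)
        (Ideal.mul_mem_left _ (k : R) (hj x))
    have hsplit : φ^[k + 1] x - x - (k + 1 : ℕ) * (φ x - x) =
        (φ (φ^[k] x - x) - (φ^[k] x - x)) + (φ^[k] x - x - k * (φ x - x)) := by
      rw [Function.iterate_succ_apply', map_sub]; push_cast; ring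
    rw [hsplit]
    exact add_mem (hjs _ hk) ih

theorem map_sub_self_mem_pow_of_iterate_eq_id {n : ℕ} (hn : IsUnit (n : R)) (hφ : ∀ x, φ^[n] x = x)
    (h0 : ∀ x, φ x - x ∈ I) (h1 : ∀ x ∈ I, φ x - x ∈ I ^ 2) (j : ℕ) :
    ∀ x, φ x - x ∈ I ^ (j + 1) := by
  induction j with
  | zero => simpa using h0
  | succ j ih =>
    intro x
    have h := iterate_sub_self_sub_mul_mem_pow_succ ih
      (map_sub_self_mem_pow_succ h0 h1 (j + 1)) x n
    rw [hφ, sub_self, zero_sub, neg_mem_iff] at h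
    simpa [← mul_assoc] using Ideal.mul_mem_left _ (↑hn.unit⁻¹ : R) h

theorem RingHom.eq_id_of_iterate_eq_id [IsNoetherianRing R] [IsLocalRing R] {n : ℕ}
    (hn : IsUnit (n : R)) (hφ : ∀ x, φ^[n] x = x) (h0 : ∀ x, φ x - x ∈ maximalIdeal R)
    (h1 : ∀ x ∈ maximalIdeal R, φ x - x ∈ maximalIdeal R ^ 2) : φ = RingHom.id R := by
  ext x
  have h : φ x - x ∈ ⨅ j : ℕ, maximalIdeal R ^ j :=
    Ideal.mem_iInf.2 fun j ↦ Ideal.pow_le_pow_right j.le_succ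
      (map_sub_self_mem_pow_of_iterate_eq_id hn hφ h0 h1 j x)
  rwa [Ideal.iInf_pow_eq_bot_of_isLocalRing _ (maximalIdeal.isMaximal R).ne_top, Ideal.mem_bot,
    sub_eq_zero] at h

end Rigidity

section ResidueField

variable {K R : Type*} [Field K] [CommRing R] [IsLocalRing R] [Algebra K R]

theorem map_mem_maximalIdeal (e : R ≃+* R) {x : R} (hx : x ∈ maximalIdeal R) :
    e x ∈ maximalIdeal R := by
  simpa [mem_maximalIdeal, mem_nonunits_iff] using hx

theorem map_mem_maximalIdeal_pow (e : R ≃+* R) {x : R} (n : ℕ) (hx : x ∈ maximalIdeal R ^ n) :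
    e x ∈ maximalIdeal R ^ n := by
  simpa [Ideal.map_pow] using Ideal.mem_map_of_mem e hx

theorem exists_sub_algebraMap_mem_maximalIdeal
    (hK : Function.Surjective ((residue R).comp (algebraMap K R))) (r : R) :
    ∃ c : K, r - algebraMap K R c ∈ maximalIdeal R := by
  obtain ⟨c, hc⟩ := hK (residue R r)
  exact ⟨c, Ideal.Quotient.eq.1 hc.symm⟩

theorem AlgEquiv.sub_self_mem_maximalIdeal
    (hK : Function.Surjective ((residue R).comp (algebraMap K R))) (σ : R ≃ₐ[K] R) (r : R) :
    σ r - r ∈ maximalIdeal R := by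
  obtain ⟨c, hc⟩ := exists_sub_algebraMap_mem_maximalIdeal hK r
  have hσ : σ r - r = σ (r - algebraMap K R c) - (r - algebraMap K R c) := by simp
  rw [hσ]
  exact sub_mem (map_mem_maximalIdeal (σ : R ≃+* R) hc) hc

theorem AlgEquiv.eq_one_of_pow_eq_one [IsNoetherianRing R]
    (hK : Function.Surjective ((residue R).comp (algebraMap K R))) {σ : R ≃ₐ[K] R} {n : ℕ}
    (hσ : σ ^ n = 1) (hn : (n : K) ≠ 0)
    (h1 : ∀ x ∈ maximalIdeal R, σ x - x ∈ maximalIdeal R ^ 2) : σ = 1 := by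
  have hnR : IsUnit (n : R) := by simpa using (isUnit_iff_ne_zero.2 hn).map (algebraMap K R)
  have hφ := RingHom.eq_id_of_iterate_eq_id (φ := (σ : R →+* R)) hnR
    (fun x ↦ by simpa using congr($hσ x)) (σ.sub_self_mem_maximalIdeal hK) h1
  ext x
  exact RingHom.congr_fun hφ x

theorem eq_zero_of_algebraMap_mul_mem_sq [IsNoetherianRing R] (hR : ¬IsField R) {c : K}
    (hc : ∀ v ∈ maximalIdeal R, algebraMap K R c * v ∈ maximalIdeal R ^ 2) : c = 0 := by
  by_contra h
  have hu : IsUnit (algebraMap K R c) := (isUnit_iff_ne_zero.2 h).map _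
  refine ((maximalIdeal_sq_lt_maximalIdeal R).2 hR).not_ge fun v hv ↦ ?_
  simpa [← mul_assoc] using Ideal.mul_mem_left _ (↑hu.unit⁻¹ : R) (hc v hv)

theorem eq_of_sub_algebraMap_mul_mem_sq [IsNoetherianRing R] (hR : ¬IsField R) {f : R → R}
    {c c' : K} (hc : ∀ v ∈ maximalIdeal R, f v - algebraMap K R c * v ∈ maximalIdeal R ^ 2)
    (hc' : ∀ v ∈ maximalIdeal R, f v - algebraMap K R c' * v ∈ maximalIdeal R ^ 2) : c = c' :=
  sub_eq_zero.1 <| eq_zero_of_algebraMap_mul_mem_sq hR fun v hv ↦ by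
    simpa [sub_mul] using sub_mem (hc' v hv) (hc v hv)

open Submodule.IsPrincipal in
theorem AlgEquiv.exists_sub_algebraMap_mul_mem_sq [(maximalIdeal R).IsPrincipal]
    (hK : Function.Surjective ((residue R).comp (algebraMap K R))) (σ : R ≃ₐ[K] R) :
    ∃ c : K, ∀ v ∈ maximalIdeal R, σ v - algebraMap K R c * v ∈ maximalIdeal R ^ 2 := by
  set t := generator (maximalIdeal R)
  have ht : t ∈ maximalIdeal R := generator_mem _
  obtain ⟨u, hu⟩ : t ∣ σ t := (mem_iff_generator_dvd _).1 (map_mem_maximalIdeal (σ : R ≃+* R) ht)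
  obtain ⟨c, hc⟩ := exists_sub_algebraMap_mem_maximalIdeal hK u
  refine ⟨c, fun v hv ↦ ?_⟩
  obtain ⟨r, rfl⟩ := (mem_iff_generator_dvd _).1 hv
  have hσ : σ (t * r) - algebraMap K R c * (t * r) =
      σ r * (t * (u - algebraMap K R c)) + algebraMap K R c * t * (σ r - r) := by
    rw [map_mul, hu]; ring
  rw [hσ, pow_two]
  exact add_mem (Ideal.mul_mem_left _ _ (Ideal.mul_mem_mul ht hc))
    (Ideal.mul_mem_mul (Ideal.mul_mem_left _ _ ht) (σ.sub_self_mem_maximalIdeal hK r))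

theorem exists_monoidHom_sub_algebraMap_mul_mem_sq [IsNoetherianRing R]
    [(maximalIdeal R).IsPrincipal] (hR : ¬IsField R)
    (hK : Function.Surjective ((residue R).comp (algebraMap K R))) :
    ∃ g : (R ≃ₐ[K] R) →* K, ∀ σ, ∀ v ∈ maximalIdeal R,
      σ v - algebraMap K R (g σ) * v ∈ maximalIdeal R ^ 2 := by
  choose g hg using AlgEquiv.exists_sub_algebraMap_mul_mem_sq hK
  refine ⟨{ toFun := g, map_one' := ?_, map_mul' := fun σ τ ↦ ?_ }, hg⟩
  · exact eq_of_sub_algebraMap_mul_mem_sq hR (hg 1) fun v _ ↦ by simp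
  · refine eq_of_sub_algebraMap_mul_mem_sq hR (hg (σ * τ)) fun v hv ↦ ?_
    have hστ : (σ * τ) v - algebraMap K R (g σ * g τ) * v =
        σ (τ v - algebraMap K R (g τ) * v) +
          algebraMap K R (g τ) * (σ v - algebraMap K R (g σ) * v) := by
      simp only [AlgEquiv.mul_apply, map_sub, map_mul, AlgEquiv.commutes]; ring
    rw [hστ]
    exact add_mem (map_mem_maximalIdeal_pow (σ : R ≃+* R) 2 (hg τ v hv))
      (Ideal.mul_mem_left _ _ (hg σ v hv))

end ResidueField

theorem IsOfFinOrder.exists_orderOf_eq_prime_pow {G : Type*} [Monoid G] {p : ℕ} (hp : p.Prime)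
    {g : G} (hg : IsOfFinOrder g) (h : ∀ n, ¬p ∣ orderOf (g ^ n) → g ^ n = 1) :
    ∃ k, orderOf g = p ^ k := by
  set k := (orderOf g).factorization p
  have hcompl : orderOf (g ^ p ^ k) = orderOf g / p ^ k :=
    orderOf_pow_of_dvd (pow_ne_zero _ hp.ne_zero) (Nat.ordProj_dvd _ _)
  have hpow : g ^ p ^ k = 1 := h _ (hcompl ▸ Nat.not_dvd_ordCompl hp hg.orderOf_pos.ne')
  obtain ⟨i, -, hi⟩ := (Nat.dvd_prime_pow hp).1 (orderOf_dvd_of_pow_eq_one hpow)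
  exact ⟨i, hi⟩

theorem dvr_aut_cotangent_hom_general (K R : Type*) [Field K] [CommRing R] [IsDomain R]
    [IsLocalRing R] [Algebra K R]
    (hres : Function.Bijective ((IsLocalRing.residue R).comp (algebraMap K R)))
    [IsDiscreteValuationRing R]
    (G : Subgroup (R ≃ₐ[K] R)) [Finite G] :
    ∃ f : G →* Kˣ,
      (∀ σ : G, ∀ v ∈ IsLocalRing.maximalIdeal R,
        (σ : R ≃ₐ[K] R) v - algebraMap K R (f σ : K) * v ∈
          (IsLocalRing.maximalIdeal R) ^ 2) ∧
      (ringChar K = 0 → Function.Injective f) ∧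
      (∀ p : ℕ, p ≠ 0 → ringChar K = p → ∀ σ ∈ f.ker, ∃ k : ℕ, orderOf σ = p ^ k) := by
  obtain ⟨g, hg⟩ :=
    exists_monoidHom_sub_algebraMap_mul_mem_sq (IsDiscreteValuationRing.not_isField R) hres.2
  let f : G →* Kˣ := g.toHomUnits.comp G.subtype
  have hfix : ∀ σ ∈ f.ker, (orderOf σ : K) ≠ 0 → σ = 1 := fun σ hσ hn ↦ by
    have hgσ : g σ = 1 := congr(Units.val $(f.mem_ker.1 hσ))
    refine Subtype.ext (AlgEquiv.eq_one_of_pow_eq_one hres.2 ?_ hn fun x hx ↦ ?_)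
    · exact congr(Subtype.val $(pow_orderOf_eq_one σ))
    · simpa [hgσ] using hg σ x hx
  refine ⟨f, fun σ ↦ hg σ, fun hchar ↦ ?_, fun p hp hchar σ hσ ↦ ?_⟩
  · have : CharZero K := (CharP.ringChar_zero_iff_CharZero K).1 hchar
    exact (injective_iff_map_eq_one f).2 fun σ hσ ↦
      hfix σ hσ (Nat.cast_ne_zero.2 (orderOf_pos σ).ne')
  · have : CharP K p := ringChar.of_eq hchar
    refine (isOfFinOrder_of_finite σ).exists_orderOf_eq_prime_pow
      ((CharP.char_is_prime_or_zero K p).resolve_right hp) fun n hn ↦ ?_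
    exact hfix _ (f.ker.pow_mem hσ n) (by rwa [Ne, CharP.cast_eq_zero_iff K p])

/-- Let `K` be a field and `R` a commutative Noetherian local domain which is a
`K`-algebra whose residue map `K → R/m` is an isomorphism, and which is regular of
Krull dimension `1`, i.e. a discrete valuation ring.  For every finite subgroup `G` of
the group of `K`-algebra automorphisms of `R` there is a group homomorphism
`f : G →* Kˣ` (the action on the cotangent space `m/m²`) such that
`σ(v) ≡ f(σ)·v (mod m²)` for all `σ ∈ G` and `v ∈ m`; moreover `f` is injective if
`char K = 0`, and if `char K = p > 0` then every element of `ker f` has order a power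
of `p`. -/
theorem dvr_aut_cotangent_hom (K R : Type*) [Field K] [CommRing R] [IsDomain R]
    [IsNoetherianRing R] [IsLocalRing R] [Algebra K R]
    (hres : Function.Bijective ((IsLocalRing.residue R).comp (algebraMap K R)))
    [IsDiscreteValuationRing R]
    (G : Subgroup (R ≃ₐ[K] R)) [Finite G] :
    ∃ f : G →* Kˣ,
      (∀ σ : G, ∀ v ∈ IsLocalRing.maximalIdeal R,
        (σ : R ≃ₐ[K] R) v - algebraMap K R (f σ : K) * v ∈
          (IsLocalRing.maximalIdeal R) ^ 2) ∧
      (ringChar K = 0 → Function.Injective f) ∧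
      (∀ p : ℕ, p ≠ 0 → ringChar K = p → ∀ σ ∈ f.ker, ∃ k : ℕ, orderOf σ = p ^ k) :=
  dvr_aut_cotangent_hom_general K R hres G
end

section
/- Let K be a field and let σ be a K-algebra automorphism of the formal power series ring K⟦X⟧. Then the constant coefficient of σ(X) is 0, the coefficient of X in σ(X) is nonzero, and the assignment σ ↦ (coefficient of X in σ(X)) is a group homomorphism from the group of K-algebra automorphisms of K⟦X⟧ to the multiplicative group Kˣ. -/
/-!
Writing `f = C a + X * g`, any `R`-algebra endomorphism `φ` of `R⟦X⟧` with `φ X` of zero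
constant term sends `f` to `C a + φ X * φ g`, so it preserves constant terms and multiplies
the coefficient of `X` by that of `φ X`. For automorphisms over a field, `σ X` is not a unit
(because `X` is not), so its constant term vanishes; hence `σ ↦ coeff 1 (σ X)` is multiplicative
on the automorphism group, and its values are units because the group has inverses.
-/

open PowerSeries

namespace PowerSeries

section AlgHom

variable {R F : Type*} [CommRing R] [FunLike F R⟦X⟧ R⟦X⟧] [AlgHomClass F R R⟦X⟧ R⟦X⟧]

theorem apply_eq_mul_apply_shift_add_const {φ : F} (f : R⟦X⟧) :
    φ f = φ X * φ (mk fun p ↦ coeff (p + 1) f) + C (constantCoeff f) := by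
  conv_lhs => rw [eq_X_mul_shift_add_const f]
  rw [map_add, map_mul, ← algebraMap_eq, AlgHomClass.commutes]

theorem constantCoeff_algHom_apply {φ : F} (hφ : constantCoeff (φ X) = 0) (f : R⟦X⟧) :
    constantCoeff (φ f) = constantCoeff f := by
  rw [apply_eq_mul_apply_shift_add_const f]
  simp [hφ]

theorem coeff_one_algHom_apply {φ : F} (hφ : constantCoeff (φ X) = 0) (f : R⟦X⟧) :
    coeff 1 (φ f) = coeff 1 (φ X) * coeff 1 f := by
  rw [apply_eq_mul_apply_shift_add_const f]
  simp [coeff_one_mul, hφ, constantCoeff_algHom_apply hφ]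

end AlgHom

theorem not_isUnit_constantCoeff_mulEquiv_X {R F : Type*} [CommRing R] [Nontrivial R]
    [EquivLike F R⟦X⟧ R⟦X⟧] [MulEquivClass F R⟦X⟧ R⟦X⟧] (σ : F) :
    ¬IsUnit (constantCoeff (σ X)) := by
  rw [← isUnit_iff_constantCoeff, isUnit_map_iff]
  simp [isUnit_iff_constantCoeff]

theorem constantCoeff_mulEquiv_X {K F : Type*} [Field K]
    [EquivLike F K⟦X⟧ K⟦X⟧] [MulEquivClass F K⟦X⟧ K⟦X⟧] (σ : F) :
    constantCoeff (σ X) = 0 := by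
  simpa [isUnit_iff_ne_zero] using not_isUnit_constantCoeff_mulEquiv_X σ

noncomputable def coeffOneAlgEquivHom (K : Type*) [Field K] : (K⟦X⟧ ≃ₐ[K] K⟦X⟧) →* K where
  toFun σ := coeff 1 (σ X)
  map_one' := coeff_one_X
  map_mul' σ τ := coeff_one_algHom_apply (constantCoeff_mulEquiv_X σ) (τ X)

end PowerSeries

/-- Let `K` be a field and let `σ` be a `K`-algebra automorphism of the formal power
series ring `K⟦X⟧`. Then the constant coefficient of `σ(X)` is `0`, the coefficient of
`X` in `σ(X)` is nonzero, and `σ ↦ (coefficient of X in σ(X))` is a group homomorphism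
from the group of `K`-algebra automorphisms of `K⟦X⟧` to `Kˣ`. -/
theorem powerSeries_aut_coeff_one (K : Type*) [Field K] :
    (∀ σ : PowerSeries K ≃ₐ[K] PowerSeries K,
      PowerSeries.constantCoeff (R := K) (σ PowerSeries.X) = 0 ∧
      PowerSeries.coeff (R := K) 1 (σ PowerSeries.X) ≠ 0) ∧
    ∃ f : (PowerSeries K ≃ₐ[K] PowerSeries K) →* Kˣ,
      ∀ σ : PowerSeries K ≃ₐ[K] PowerSeries K,
        (f σ : K) = PowerSeries.coeff (R := K) 1 (σ PowerSeries.X) := by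
  let f := (coeffOneAlgEquivHom K).toHomUnits
  have hf : ∀ σ, (f σ : K) = coeff 1 (σ X) := fun _ ↦ rfl
  exact ⟨fun σ ↦ ⟨constantCoeff_mulEquiv_X σ, hf σ ▸ (f σ).ne_zero⟩, f, hf⟩
end

section
/- Let K be a field and let σ be a K-algebra automorphism of the formal power series ring K⟦X⟧. Then for every power series f ∈ K⟦X⟧, σ(f) equals the substitution of σ(X) into f, i.e. σ(f) = f(σ(X)). (Every K-algebra automorphism of K⟦X⟧ is the substitution map determined by σ(X).) -/
open scoped Classical

/-- Substitution of the power series `g` (with zero constant term) into the power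
series `f`, i.e. the power series `f(g)`.  Since `g` has zero constant coefficient,
`g ^ n` has no terms of degree `< n`, so the coefficient of `X ^ d` in `f(g)` is the
finite sum `∑_{n ≤ d} (coeff n f) * (coeff d (g ^ n))`. -/
noncomputable def PowerSeries.substitute {K : Type*} [Field K]
    (g f : PowerSeries K) : PowerSeries K :=
  PowerSeries.mk fun d =>
    ∑ n ∈ Finset.range (d + 1), PowerSeries.coeff n f * PowerSeries.coeff d (g ^ n)

/-! Write `f = ∑_{n ≤ d} fₙ Xⁿ + X^(d+1) h`. An algebra map `φ` sends this to
`∑_{n ≤ d} fₙ φ(X)ⁿ + φ(X)^(d+1) φ(h)`, and the last term does not reach degree `d` as soon as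
`X ∣ φ(X)`. That holds automatically over a field: if the constant term `c` of `φ(X)` were
nonzero, `φ` would send the unit `X - c` to `φ(X) - c`, a non-unit. -/

open PowerSeries Finset

namespace PowerSeries

variable {R : Type*} [CommRing R]

theorem X_pow_dvd_sub_sum_range (f : R⟦X⟧) (n : ℕ) :
    X ^ n ∣ f - ∑ i ∈ range n, coeff i f • X ^ i := by
  refine X_pow_dvd_iff.mpr fun m hm => ?_
  simp [coeff_X_pow, mem_range.mpr hm]

theorem not_isUnit_constantCoeff_algHom_X [Nontrivial R] (φ : R⟦X⟧ →ₐ[R] R⟦X⟧) :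
    ¬IsUnit (constantCoeff (φ X)) := by
  intro hc
  have hunit : IsUnit (X - algebraMap R R⟦X⟧ (constantCoeff (φ X))) :=
    isUnit_iff_constantCoeff.mpr (by simpa using hc.neg)
  have himage := hunit.map φ
  rw [map_sub, AlgHom.commutes, isUnit_iff_constantCoeff] at himage
  simp at himage

theorem coeff_algHom_apply_eq_sum (φ : R⟦X⟧ →ₐ[R] R⟦X⟧) (hφ : constantCoeff (φ X) = 0)
    (f : R⟦X⟧) (d : ℕ) :
    coeff d (φ f) = ∑ n ∈ range (d + 1), coeff n f * coeff d (φ X ^ n) := by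
  obtain ⟨h, hh⟩ := X_pow_dvd_sub_sum_range f (d + 1)
  have hφf : φ f = ∑ n ∈ range (d + 1), coeff n f • φ X ^ n + φ X ^ (d + 1) * φ h := by
    rw [← map_pow, ← map_mul, ← hh]
    simp
  have htail : coeff d (φ X ^ (d + 1) * φ h) = 0 := by
    have hdvd : X ^ (d + 1) ∣ φ X ^ (d + 1) * φ h :=
      dvd_mul_of_dvd_left (pow_dvd_pow_of_dvd (X_dvd_iff.mpr hφ) _) _
    exact X_pow_dvd_iff.mp hdvd d d.lt_succ_self
  simp [hφf, htail]

end PowerSeries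

/-- Every `K`-algebra automorphism `σ` of `K⟦X⟧` is the substitution map determined by
`σ(X)`: for every power series `f`, `σ(f) = f(σ(X))`. -/
theorem powerSeries_aut_eq_subst (K : Type*) [Field K]
    (σ : PowerSeries K ≃ₐ[K] PowerSeries K) (f : PowerSeries K) :
    σ f = PowerSeries.substitute (σ PowerSeries.X) f := by
  have hσX : constantCoeff (σ X) = 0 :=
    not_not.mp fun hc => not_isUnit_constantCoeff_algHom_X σ.toAlgHom (Ne.isUnit hc)
  ext d
  simpa [PowerSeries.substitute] using coeff_algHom_apply_eq_sum σ.toAlgHom hσX f d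
end

section
/- Let K be a field of characteristic 0. Then every finite subgroup of the group of K-algebra automorphisms of the formal power series ring K⟦X⟧ is cyclic. -/
/-!
An automorphism `σ` of `K⟦X⟧` sends `X` to a series without constant term, so it preserves the
`X`-adic filtration and `σ ↦ coeff 1 (σ X)` is a homomorphism to `K`. Its kernel has no
nontrivial element of finite order: if `σ X = X + a X ^ k + O(X ^ (k + 1))` with `k ≥ 2`, then
`σ ^ m X = X + m a X ^ k + O(X ^ (k + 1))`, so `σ ^ n = 1` forces `n a = 0`, hence `a = 0` in
characteristic zero. A finite subgroup therefore embeds into `Kˣ`, and is cyclic.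
-/

open PowerSeries

namespace PowerSeries

variable {K : Type*} [Field K] {F : Type*} [FunLike F K⟦X⟧ K⟦X⟧] [AlgHomClass F K K⟦X⟧ K⟦X⟧]
  (φ : F)

theorem map_C_of_algHomClass (a : K) : φ (C a) = C a := by
  rw [← algebraMap_eq, AlgHomClass.commutes]

theorem constantCoeff_map_X : constantCoeff (φ X) = 0 := by
  by_contra h
  have hunit : IsUnit (X - C (constantCoeff (φ X))) :=
    isUnit_iff_constantCoeff.mpr (by simpa using h)
  have := isUnit_iff_constantCoeff.mp (hunit.map φ)
  simp [map_C_of_algHomClass] at this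

theorem X_pow_dvd_map {n : ℕ} {f : K⟦X⟧} (h : X ^ n ∣ f) : X ^ n ∣ φ f := by
  obtain ⟨g, rfl⟩ := h
  rw [map_mul, map_pow]
  exact (pow_dvd_pow_of_dvd (X_dvd_iff.mpr (constantCoeff_map_X φ)) n).mul_right _

theorem coeff_map_eq_coeff_map_trunc {m n : ℕ} (hmn : m < n) (f : K⟦X⟧) :
    coeff m (φ f) = coeff m (φ (trunc n f)) := by
  have hf : X ^ n ∣ f - (trunc n f : K⟦X⟧) :=
    ⟨_, sub_eq_iff_eq_add.mpr (eq_X_pow_mul_shift_add_trunc n f)⟩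
  have := X_pow_dvd_iff.mp (X_pow_dvd_map φ hf) m hmn
  rwa [map_sub, map_sub, sub_eq_zero] at this

theorem constantCoeff_map (f : K⟦X⟧) : constantCoeff (φ f) = constantCoeff f := by
  simpa [trunc_one_left, map_C_of_algHomClass] using coeff_map_eq_coeff_map_trunc φ one_pos f

theorem coeff_one_map (f : K⟦X⟧) : coeff 1 (φ f) = coeff 1 f * coeff 1 (φ X) := by
  rw [coeff_map_eq_coeff_map_trunc φ one_lt_two f, show trunc 2 f = _ from trunc_succ f 1,
    trunc_one_left]
  simp [coeff_C, monomial_eq_C_mul_X_pow, map_C_of_algHomClass]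

theorem map_eq_self_of_map_X (hX : φ X = X) (f : K⟦X⟧) : φ f = f := by
  have hpoly : ∀ p : Polynomial K, φ p = p := fun p => by
    simpa using congrArg (· p) <| Polynomial.algHom_ext (B := K⟦X⟧)
      (f := (AlgHomClass.toAlgHom φ).comp (Polynomial.coeToPowerSeries.algHom K))
      (g := Polynomial.coeToPowerSeries.algHom K) (by simpa using hX)
  ext m
  rw [coeff_map_eq_coeff_map_trunc φ (lt_add_one m), hpoly, Polynomial.coeff_coe,
    coeff_trunc, if_pos (lt_add_one m)]

theorem X_pow_succ_dvd_map_sub_self (hφ : X ^ 2 ∣ φ X - X) {k : ℕ} {f : K⟦X⟧}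
    (hf : X ^ k ∣ f) : X ^ (k + 1) ∣ φ f - f := by
  obtain ⟨u, rfl⟩ := hf
  obtain ⟨w, hw⟩ := X_dvd_iff.mpr (constantCoeff_map_X φ)
  have hw1 : X ∣ w - 1 := (mul_dvd_mul_iff_left X_ne_zero).mp (by rwa [← sq, mul_sub_one, ← hw])
  have hu : X ∣ φ u - u := X_dvd_iff.mpr (by rw [map_sub, constantCoeff_map, sub_self])
  have hsplit : φ (X ^ k * u) - X ^ k * u = X ^ k * ((w ^ k - 1) * φ u + (φ u - u)) := by
    rw [map_mul, map_pow, hw]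
    ring
  rw [hsplit, pow_succ]
  exact mul_dvd_mul_left _ (dvd_add ((hw1.trans (sub_one_dvd_pow_sub_one w k)).mul_right _) hu)

theorem X_pow_succ_dvd_iterate_map_X_sub {k : ℕ} (hk : 2 ≤ k) (hφ : X ^ k ∣ φ X - X) (m : ℕ) :
    X ^ (k + 1) ∣ φ^[m] X - X - (m : K⟦X⟧) * (φ X - X) := by
  induction m with
  | zero => simp
  | succ m ih =>
    have hstep : φ^[m + 1] X - X - ((m + 1 : ℕ) : K⟦X⟧) * (φ X - X) =
        (m : K⟦X⟧) * (φ (φ X - X) - (φ X - X)) + φ (φ^[m] X - X - (m : K⟦X⟧) * (φ X - X)) := by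
      rw [Function.iterate_succ_apply']
      simp only [map_sub, map_mul, map_natCast]
      push_cast
      ring
    rw [hstep]
    exact dvd_add ((X_pow_succ_dvd_map_sub_self φ ((pow_dvd_pow X hk).trans hφ) hφ).mul_left _)
      (X_pow_dvd_map φ ih)

theorem X_pow_succ_dvd_map_X_sub_X_of_iterate_eq [CharZero K] {n : ℕ} (hn : n ≠ 0)
    (hφn : φ^[n] X = X) {k : ℕ} (hk : 2 ≤ k) (hφ : X ^ k ∣ φ X - X) :
    X ^ (k + 1) ∣ φ X - X := by
  have hunit : IsUnit (n : K⟦X⟧) := by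
    rw [← map_natCast (C (R := K))]
    exact (isUnit_iff_ne_zero.mpr (Nat.cast_ne_zero.mpr hn)).map C
  have := X_pow_succ_dvd_iterate_map_X_sub φ hk hφ n
  rwa [hφn, sub_self, zero_sub, dvd_neg, hunit.dvd_mul_left] at this

theorem map_X_eq_X_of_iterate_eq [CharZero K] {n : ℕ} (hn : n ≠ 0) (hφn : φ^[n] X = X)
    (h1 : coeff 1 (φ X) = 1) : φ X = X := by
  have h2 : X ^ 2 ∣ φ X - X := X_pow_dvd_iff.mpr fun m hm => by
    interval_cases m <;> simp [constantCoeff_map_X, h1]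
  have hall : ∀ k, 2 ≤ k → X ^ k ∣ φ X - X := fun k hk =>
    Nat.le_induction h2 (fun k hk => X_pow_succ_dvd_map_X_sub_X_of_iterate_eq φ hn hφn hk) k hk
  rw [← sub_eq_zero]
  ext m
  simpa using X_pow_dvd_iff.mp (hall (m + 2) (by omega)) m (by omega)

variable (K) in
noncomputable def linearCoeffHom : (K⟦X⟧ ≃ₐ[K] K⟦X⟧) →* K where
  toFun σ := coeff 1 (σ X)
  map_one' := coeff_one_X
  map_mul' σ τ := by rw [AlgEquiv.mul_apply, coeff_one_map, mul_comm]

theorem eq_one_of_isOfFinOrder_of_linearCoeffHom_eq_one [CharZero K] {σ : K⟦X⟧ ≃ₐ[K] K⟦X⟧}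
    (hσ : IsOfFinOrder σ) (h1 : linearCoeffHom K σ = 1) : σ = 1 := by
  obtain ⟨n, hn, hσn⟩ := hσ.exists_pow_eq_one
  have hX : σ^[n] X = X := by rw [← AlgEquiv.coe_pow, hσn, AlgEquiv.one_apply]
  exact AlgEquiv.ext (map_eq_self_of_map_X σ (map_X_eq_X_of_iterate_eq σ hn.ne' hX h1))

end PowerSeries

/-- If `K` is a field of characteristic `0`, then every finite subgroup of the group of
`K`-algebra automorphisms of `K⟦X⟧` is cyclic. -/
theorem powerSeries_aut_finite_subgroup_isCyclic (K : Type*) [Field K] [CharZero K]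
    (G : Subgroup (PowerSeries K ≃ₐ[K] PowerSeries K)) [Finite G] :
    IsCyclic G := by
  refine isCyclic_of_injective_ringHom ((linearCoeffHom K).comp G.subtype) <|
    (injective_iff_map_eq_one _).mpr fun g hg => Subtype.ext ?_
  exact eq_one_of_isOfFinOrder_of_linearCoeffHom_eq_one
    (G.subtype.isOfFinOrder (isOfFinOrder_of_finite g)) hg
end

section
/- Let a, b be nonzero rational numbers and let B = ℍ[ℚ, a, b] be the corresponding quaternion algebra over ℚ. Assume B is a division ring and B is indefinite, i.e. ℍ[ℝ, a, b] is not a division ring. Then there exist three elements ω₁, ω₂, ω₃ ∈ B which are linearly independent over ℚ, such that star ωᵢ = −ωᵢ (they are pure quaternions) and ωᵢ * ωᵢ = dᵢ • 1 for some rational numbers dᵢ > 0 (i = 1, 2, 3). -/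
/-!
A pure quaternion `ω = x i + y j + z k` of `ℍ[K, a, b]` squares to `a x² + b y² - a b z²`.
If `a, b < 0` this ternary form is negative definite, the reduced norm `q q̄` is positive for
every `q ≠ 0`, and `ℍ[K, a, b]` is a division ring; so indefiniteness forces `a > 0` or `b > 0`.
If `a > 0`, the pure quaternions `i`, `j + N i`, `k + M i` are linearly independent and have
positive squares `a`, `a N² + b`, `a (M² - b)` once `N, M` are large. The case `b > 0` follows
by the isomorphism `ℍ[K, b, a] ≃ ℍ[K, a, b]` exchanging `i` and `j`.
-/

open Quaternion

theorem exists_lt_sq {R : Type*} [CommRing R] [LinearOrder R] [IsStrictOrderedRing R] (c : R) :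
    ∃ N : R, c < N ^ 2 :=
  ⟨c + 1, by nlinarith [sq_nonneg (2 * c + 1)]⟩

theorem LinearIndependent.fin_three_add_smul {R M : Type*} [Ring R] [AddCommGroup M] [Module R M]
    {u v w : M} (h : LinearIndependent R ![u, v, w]) (s t : R) :
    LinearIndependent R ![u, v + s • u, w + t • u] := by
  convert (linearIndependent_add_smul_iff (c := ![0, s, t]) (i := 0) rfl).2 h using 1
  funext i
  fin_cases i <;> simp

namespace QuaternionAlgebra

section CommRing

variable {R : Type*} [CommRing R] {a b : R}

theorem mul_self_eq_smul_one_of_re_eq_zero {x : ℍ[R,a,b]} (hx : x.re = 0) :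
    x * x = (a * x.imI ^ 2 + b * x.imJ ^ 2 - a * b * x.imK ^ 2) • (1 : ℍ[R,a,b]) := by
  ext <;>
    simp only [re_mul, imI_mul, imJ_mul, imK_mul, re_smul, imI_smul, imJ_smul, imK_smul,
      re_one, imI_one, imJ_one, imK_one, hx, smul_eq_mul] <;>
    ring

theorem linearIndependent_i_j_k [Nontrivial R] :
    LinearIndependent R ![(⟨0, 1, 0, 0⟩ : ℍ[R,a,b]), ⟨0, 0, 1, 0⟩, ⟨0, 0, 0, 1⟩] := by
  convert (basisOneIJK a 0 b).linearIndependent.comp _ (Fin.succ_injective 3)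
  funext i
  fin_cases i <;> ext <;> simp [basisOneIJK]

end CommRing

section OrderedRing

variable {R : Type*} [CommRing R] [LinearOrder R] [IsStrictOrderedRing R] {a b : R}

theorem re_mul_star_pos (ha : a < 0) (hb : b < 0) {x : ℍ[R,a,b]} (hx : x ≠ 0) :
    0 < (x * star x).re := by
  have hre : (x * star x).re =
      x.re ^ 2 + (-a) * x.imI ^ 2 + (-b) * x.imJ ^ 2 + (a * b) * x.imK ^ 2 := by
    simp only [re_mul, re_star, imI_star, imJ_star, imK_star]
    ring
  have hI := mul_nonneg (neg_nonneg.2 ha.le) (sq_nonneg x.imI)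
  have hJ := mul_nonneg (neg_nonneg.2 hb.le) (sq_nonneg x.imJ)
  have hK := mul_nonneg (mul_pos_of_neg_of_neg ha hb).le (sq_nonneg x.imK)
  have hcoord : x.re ≠ 0 ∨ x.imI ≠ 0 ∨ x.imJ ≠ 0 ∨ x.imK ≠ 0 := by
    contrapose! hx
    ext <;> simp [hx]
  rw [hre]
  rcases hcoord with h | h | h | h
  · nlinarith [sq_pos_of_ne_zero h]
  · nlinarith [mul_pos (neg_pos.2 ha) (sq_pos_of_ne_zero h), sq_nonneg x.re]
  · nlinarith [mul_pos (neg_pos.2 hb) (sq_pos_of_ne_zero h), sq_nonneg x.re]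
  · nlinarith [mul_pos (mul_pos_of_neg_of_neg ha hb) (sq_pos_of_ne_zero h), sq_nonneg x.re]

end OrderedRing

variable {K : Type*} [Field K] [LinearOrder K] [IsStrictOrderedRing K] {a b : K}

theorem isUnit_of_ne_zero_of_neg (ha : a < 0) (hb : b < 0) {x : ℍ[K,a,b]} (hx : x ≠ 0) :
    IsUnit x := by
  have hnorm : IsUnit (x * star x) := by
    rw [mul_star_eq_coe]
    exact (IsUnit.mk0 _ (re_mul_star_pos ha hb hx).ne').map (algebraMap K ℍ[K,a,b])
  exact ((star_comm_self (x := x)).symm.isUnit_mul_iff.1 hnorm).1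

theorem exists_linearIndependent_pure_sq_pos_of_pos_left (ha : 0 < a) (b : K) :
    ∃ ω : Fin 3 → ℍ[K,a,b], LinearIndependent K ω ∧
      ∀ i, star (ω i) = -(ω i) ∧ ∃ d : K, 0 < d ∧ ω i * ω i = d • (1 : ℍ[K,a,b]) := by
  obtain ⟨N, hN⟩ := exists_lt_sq (-b / a)
  obtain ⟨M, hM⟩ := exists_lt_sq b
  have hN' : 0 < a * N ^ 2 + b := by
    have := (div_lt_iff₀ ha).1 hN
    nlinarith
  have hM' : a * b < a * M ^ 2 := mul_lt_mul_of_pos_left hM ha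
  refine ⟨_, linearIndependent_i_j_k.fin_three_add_smul N M, fun i => ?_⟩
  fin_cases i <;> exact ⟨star_eq_neg.2 (by simp), _, by simp [ha, hN', hM'],
    mul_self_eq_smul_one_of_re_eq_zero (by simp)⟩

theorem exists_linearIndependent_pure_sq_pos (h : 0 < a ∨ 0 < b) :
    ∃ ω : Fin 3 → ℍ[K,a,b], LinearIndependent K ω ∧
      ∀ i, star (ω i) = -(ω i) ∧ ∃ d : K, 0 < d ∧ ω i * ω i = d • (1 : ℍ[K,a,b]) := by
  rcases h with ha | hb
  · exact exists_linearIndependent_pure_sq_pos_of_pos_left ha b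
  obtain ⟨ω, hli, hω⟩ := exists_linearIndependent_pure_sq_pos_of_pos_left hb a
  let e := swapEquiv b a
  refine ⟨e ∘ ω, hli.map' e.toLinearMap (LinearEquiv.ker e.toLinearEquiv), fun i => ?_⟩
  obtain ⟨hstar, d, hd, hsq⟩ := hω i
  exact ⟨star_eq_neg.2 (star_eq_neg.1 hstar :), d, hd, by simp [e, ← map_mul, hsq]⟩

end QuaternionAlgebra

theorem quaternion_indefinite_exists_pure_positive_general (a b : ℚ) (ha : a ≠ 0) (hb : b ≠ 0)
    (hindef : ¬ ∀ x : ℍ[ℝ, (a : ℝ), (b : ℝ)], x ≠ 0 → IsUnit x) :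
    ∃ ω : Fin 3 → ℍ[ℚ, a, b], LinearIndependent ℚ ω ∧
      ∀ i, star (ω i) = -(ω i) ∧ ∃ d : ℚ, 0 < d ∧ ω i * ω i = d • (1 : ℍ[ℚ, a, b]) := by
  refine QuaternionAlgebra.exists_linearIndependent_pure_sq_pos ?_
  by_contra! hneg
  have ha' : (a : ℝ) < 0 := by exact_mod_cast hneg.1.lt_of_ne ha
  have hb' : (b : ℝ) < 0 := by exact_mod_cast hneg.2.lt_of_ne hb
  exact hindef fun x hx => QuaternionAlgebra.isUnit_of_ne_zero_of_neg ha' hb' hx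

/-- Let `B = ℍ[ℚ, a, b]` be a rational quaternion algebra (`a, b ≠ 0`) which is a
division ring and indefinite (i.e. `ℍ[ℝ, a, b]` is not a division ring).  Then there
exist three elements `ω₁, ω₂, ω₃ ∈ B`, linearly independent over `ℚ`, which are pure
quaternions (`star ωᵢ = -ωᵢ`) and satisfy `ωᵢ * ωᵢ = dᵢ • 1` for some rationals
`dᵢ > 0`. -/
theorem quaternion_indefinite_exists_pure_positive (a b : ℚ) (ha : a ≠ 0) (hb : b ≠ 0)
    (hdiv : ∀ x : ℍ[ℚ, a, b], x ≠ 0 → IsUnit x)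
    (hindef : ¬ ∀ x : ℍ[ℝ, (a : ℝ), (b : ℝ)], x ≠ 0 → IsUnit x) :
    ∃ ω : Fin 3 → ℍ[ℚ, a, b], LinearIndependent ℚ ω ∧
      ∀ i, star (ω i) = -(ω i) ∧ ∃ d : ℚ, 0 < d ∧ ω i * ω i = d • (1 : ℍ[ℚ, a, b]) :=
  quaternion_indefinite_exists_pure_positive_general a b ha hb hindef
end

section
/- Let a, b be nonzero rational numbers and let B = ℍ[ℚ, a, b] be the corresponding quaternion algebra over ℚ; assume B is a division ring. Let O ⊆ B be a subring whose ℚ-linear span is all of B, and let ω ∈ B satisfy star ω = −ω and ω * ω = d • 1 for some rational number d > 0. Then there exists γ ∈ O with γ * star γ = 1 and γ ≠ 1, γ ≠ −1. -/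
/-!
Clearing denominators, some integer multiple `ω'` of `ω` lies in `O` and satisfies `ω' * ω' = D`
for a positive integer `D`. This `D` is not a square: `D = m ^ 2` would give
`(ω' - m) * (ω' + m) = 0`, so `ω' = ±m` would be fixed by `star`, whereas `star ω' = -ω' ≠ ω'`.
Hence Pell's equation `x ^ 2 - D * y ^ 2 = 1` has a solution with `y ≠ 0`, and `γ = x + y * ω'`
lies in `O`, has reduced norm `x ^ 2 - D * y ^ 2 = 1`, and is not an integer, so `γ ≠ ±1`.
-/

open Quaternion

theorem exists_nsmul_mem_of_mem_span_rat {M : Type*} [AddCommGroup M] [Module ℚ M]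
    (A : AddSubgroup M) {x : M} (hx : x ∈ Submodule.span ℚ (A : Set M)) :
    ∃ n : ℕ, n ≠ 0 ∧ n • x ∈ A := by
  induction hx using Submodule.span_induction with
  | mem x hx => exact ⟨1, one_ne_zero, by rw [one_smul]; exact hx⟩
  | zero => exact ⟨1, one_ne_zero, by simp⟩
  | add x y _ _ hx hy =>
    obtain ⟨n, hn, hnx⟩ := hx
    obtain ⟨m, hm, hmy⟩ := hy
    refine ⟨n * m, mul_ne_zero hn hm, ?_⟩
    rw [smul_add, mul_nsmul x n m, mul_nsmul' y n m]
    exact add_mem (nsmul_mem hnx m) (nsmul_mem hmy n)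
  | smul q x _ hx =>
    obtain ⟨n, hn, hnx⟩ := hx
    refine ⟨n * q.den, mul_ne_zero hn q.den_ne_zero, ?_⟩
    have : (n * q.den) • (q • x) = q.num • (n • x) := by
      rw [← Nat.cast_smul_eq_nsmul ℚ, ← Nat.cast_smul_eq_nsmul ℚ, ← Int.cast_smul_eq_zsmul ℚ,
        smul_smul, smul_smul, ← Rat.mul_den_eq_num]
      push_cast
      ring_nf
    rw [this]
    exact zsmul_mem hnx q.num

theorem nsmul_mul_self_eq_intCast {R : Type*} [Ring R] [Algebra ℚ R] {ω : R} {d : ℚ}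
    (h : ω * ω = d • 1) (k : ℕ) :
    ((k * d.den) • ω) * ((k * d.den) • ω) = ((k ^ 2 * d.den * d.num : ℤ) : R) := by
  rw [← Nat.cast_smul_eq_nsmul ℚ, smul_mul_smul_comm, h, smul_smul, ← zsmul_one,
    ← Int.cast_smul_eq_zsmul ℚ]
  push_cast
  rw [← Rat.mul_den_eq_num]
  ring_nf

section StarRing

variable {R : Type*} [Ring R] [StarRing R] [NoZeroDivisors R] [CharZero R]

theorem eq_zero_of_star_eq_neg_of_eq_intCast {x : R} (hx : star x = -x) {c : ℤ} (hc : x = c) :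
    x = 0 := by
  have : star x = x := by rw [hc, star_intCast]
  exact neg_eq_self.1 (hx ▸ this)

theorem not_isSquare_of_mul_self_eq_intCast {ω : R} (hω : star ω = -ω) (hω0 : ω ≠ 0) {D : ℤ}
    (h : ω * ω = D) : ¬ IsSquare D := by
  rintro ⟨m, rfl⟩
  push_cast at h
  rcases (Int.cast_commute m ω).symm.mul_self_eq_mul_self_iff.1 h with h | h
  · exact hω0 (eq_zero_of_star_eq_neg_of_eq_intCast hω h)
  · exact hω0 (eq_zero_of_star_eq_neg_of_eq_intCast hω (c := -m) (by push_cast; exact h))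

theorem Subring.exists_mul_star_eq_one_of_mul_self_eq_intCast (S : Subring R) {ω : R}
    (hωS : ω ∈ S) (hω : star ω = -ω) {D : ℤ} (hD : 0 < D) (hω2 : ω * ω = D) :
    ∃ γ ∈ S, γ * star γ = 1 ∧ γ ≠ 1 ∧ γ ≠ -1 := by
  have hω0 : ω ≠ 0 := by
    rintro rfl
    rw [mul_zero, eq_comm, Int.cast_eq_zero] at hω2
    exact hD.ne' hω2
  obtain ⟨x, y, hxy, hy⟩ :=
    Pell.exists_of_not_isSquare hD (not_isSquare_of_mul_self_eq_intCast hω hω0 hω2)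
  have hz_star : star ((y : R) * ω) = -(y * ω) := by
    rw [star_mul, hω, star_intCast, neg_mul, (Int.cast_commute y ω).eq]
  have hz_sq : (y * ω) * (y * ω) = ((y * y * D : ℤ) : R) := by
    rw [(Int.cast_commute y ω).symm.mul_mul_mul_comm, hω2]
    push_cast
    rfl
  set z : R := y * ω
  have hz0 : z ≠ 0 := mul_ne_zero (Int.cast_ne_zero.2 hy) hω0
  refine ⟨x + z, add_mem (intCast_mem S x) (mul_mem (intCast_mem S y) hωS), ?_, ?_, ?_⟩
  · rw [star_add, star_intCast, hz_star, ← sub_eq_add_neg,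
      ← (Int.cast_commute x z).mul_self_sub_mul_self_eq, hz_sq]
    exact_mod_cast (show x * x - y * y * D = 1 by linear_combination hxy)
  · intro h
    exact hz0 (eq_zero_of_star_eq_neg_of_eq_intCast hz_star (c := 1 - x)
      (by push_cast; exact eq_sub_of_add_eq' h))
  · intro h
    exact hz0 (eq_zero_of_star_eq_neg_of_eq_intCast hz_star (c := -1 - x)
      (by push_cast; exact eq_sub_of_add_eq' h))

end StarRing

theorem quaternion_order_exists_nontrivial_norm_one_general (a b : ℚ)
    (hdiv : ∀ x : ℍ[ℚ, a, b], x ≠ 0 → IsUnit x)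
    (O : Subring ℍ[ℚ, a, b])
    (hspan : Submodule.span ℚ (O : Set ℍ[ℚ, a, b]) = ⊤)
    (ω : ℍ[ℚ, a, b]) (hω : star ω = -ω)
    (d : ℚ) (hd : 0 < d) (hω2 : ω * ω = d • (1 : ℍ[ℚ, a, b])) :
    ∃ γ ∈ O, γ * star γ = 1 ∧ γ ≠ 1 ∧ γ ≠ -1 := by
  have : NoZeroDivisors ℍ[ℚ, a, b] :=
    ⟨fun {x _} h => or_iff_not_imp_left.2 fun hx => (hdiv x hx).mul_right_eq_zero.1 h⟩
  have : CharZero ℍ[ℚ, a, b] := charZero_of_injective_algebraMap (algebraMap ℚ _).injective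
  obtain ⟨k, hk, hkω⟩ := exists_nsmul_mem_of_mem_span_rat O.toAddSubgroup
    (hspan ▸ Submodule.mem_top : ω ∈ Submodule.span ℚ (O : Set ℍ[ℚ, a, b]))
  refine O.exists_mul_star_eq_one_of_mul_self_eq_intCast (ω := (k * d.den) • ω) ?_ ?_ ?_
    (nsmul_mul_self_eq_intCast hω2 k)
  · rw [mul_nsmul]
    exact nsmul_mem hkω _
  · rw [star_nsmul, hω, smul_neg]
  · have := Rat.num_pos.2 hd
    positivity

/-- Let `B = ℍ[ℚ, a, b]` (`a, b ≠ 0`) be a rational quaternion division algebra, let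
`O ⊆ B` be a subring whose `ℚ`-linear span is all of `B`, and let `ω ∈ B` be a pure
quaternion (`star ω = -ω`) with `ω * ω = d • 1` for some rational `d > 0`.  Then there
exists a norm-one element `γ ∈ O` (i.e. `γ * star γ = 1`) with `γ ≠ 1` and `γ ≠ -1`. -/
theorem quaternion_order_exists_nontrivial_norm_one (a b : ℚ) (ha : a ≠ 0) (hb : b ≠ 0)
    (hdiv : ∀ x : ℍ[ℚ, a, b], x ≠ 0 → IsUnit x)
    (O : Subring ℍ[ℚ, a, b])
    (hspan : Submodule.span ℚ (O : Set ℍ[ℚ, a, b]) = ⊤)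
    (ω : ℍ[ℚ, a, b]) (hω : star ω = -ω)
    (d : ℚ) (hd : 0 < d) (hω2 : ω * ω = d • (1 : ℍ[ℚ, a, b])) :
    ∃ γ ∈ O, γ * star γ = 1 ∧ γ ≠ 1 ∧ γ ≠ -1 :=
  quaternion_order_exists_nontrivial_norm_one_general a b hdiv O hspan ω hω d hd hω2
end

section
/- Let a, b be nonzero rational numbers and let B = ℍ[ℚ, a, b] be the corresponding quaternion algebra over ℚ. Assume B is a division ring and B is indefinite, i.e. ℍ[ℝ, a, b] is not a division ring. Let O ⊆ B be an order, i.e. a subring of B that is finitely generated as a ℤ-module and whose ℚ-linear span is all of B, and let Γ = {γ ∈ O : γ * star γ = 1} be its group of norm-one elements. Let ι : B → ℍ[ℝ, a, b] denote the canonical ℚ-algebra embedding induced by the inclusion ℚ ↪ ℝ (applied to each of the four coordinates). Suppose α is a unit of ℍ[ℝ, a, b] which normalizes ι(Γ), i.e. α * ι(γ) * α⁻¹ ∈ ι(Γ) and α⁻¹ * ι(γ) * α ∈ ι(Γ) for all γ ∈ Γ. Then there exist a nonzero real number r and a nonzero element β ∈ B such that α = r • ι(β). -/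
/-!
Since `ℍ[ℝ, a, b]` is not a division ring, `a` or `b` is positive, so `B` contains anticommuting
pure quaternions `u₁, u₂` whose squares are positive rationals, and these are not squares
because `B` is a division ring. Pell's equation yields norm-one elements `t + s • uᵢ` (`s ≠ 0`)
of `O`; conjugation by `α` maps them, and hence `ι uᵢ`, into `ι B`, say `α ι(uᵢ) α⁻¹ = ι(vᵢ)`.
The `vᵢ` satisfy the same relations as the `uᵢ`, so an elementary Skolem–Noether argument gives
`β ≠ 0` with `β uᵢ = vᵢ β`. Then `α⁻¹ ι(β)` commutes with `ι u₁` and `ι u₂`, hence is a nonzero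
real scalar.
-/

open Quaternion

/-- The canonical `ℚ`-algebra embedding `ℍ[ℚ, a, b] → ℍ[ℝ, a, b]` induced by the
inclusion `ℚ ↪ ℝ`, applied to each of the four coordinates. -/
def QuaternionAlgebra.toReal (a b : ℚ) (q : ℍ[ℚ, a, b]) : ℍ[ℝ, (a : ℝ), (b : ℝ)] :=
  ⟨(q.re : ℝ), (q.imI : ℝ), (q.imJ : ℝ), (q.imK : ℝ)⟩

theorem AddSubgroup.exists_zsmul_mem_of_mem_span_rat {M : Type*} [AddCommGroup M] [Module ℚ M]
    (O : AddSubgroup M) {x : M} (hx : x ∈ Submodule.span ℚ (O : Set M)) :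
    ∃ n : ℤ, n ≠ 0 ∧ n • x ∈ O := by
  obtain ⟨y, hy, z, rfl⟩ := (IsLocalization.mem_span_iff (nonZeroDivisors ℤ) (S := ℚ)).1 hx
  have hz : (z : ℤ) ≠ 0 := nonZeroDivisors.coe_ne_zero z
  refine ⟨z, hz, ?_⟩
  rw [← Int.cast_smul_eq_zsmul ℚ, smul_smul, IsFractionRing.mk'_eq_div]
  simp only [map_one, algebraMap_int_eq, eq_intCast]
  rw [mul_one_div_cancel (by exact_mod_cast hz), one_smul]
  rwa [← O.coe_toIntSubmodule, Submodule.span_eq] at hy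

theorem exists_intCast_add_mul_mul_star_eq_one {R : Type*} [Ring R] [StarRing R] {w : R}
    (hstar : star w = -w) {D : ℤ} (hD : 0 < D) (hDsq : ¬IsSquare D) (hw : w * w = D) :
    ∃ x y : ℤ, y ≠ 0 ∧ (x + y * w) * star (x + y * w : R) = 1 := by
  obtain ⟨x, y, hxy, hy⟩ := Pell.exists_of_not_isSquare hD hDsq
  refine ⟨x, y, hy, ?_⟩
  have hstar' : star (x + y * w : R) = x - y * w := by
    rw [star_add, star_mul, star_intCast, star_intCast, hstar, neg_mul,
      (Int.cast_commute y w).eq, sub_eq_add_neg]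
  have hyw : (y * w) * (y * w : R) = ((y * y * D : ℤ) : R) := by
    rw [mul_assoc, ← mul_assoc w, ← (Int.cast_commute y w).eq, mul_assoc, hw]
    push_cast
    noncomm_ring
  rw [hstar', ← (Int.cast_commute x (y * w)).mul_self_sub_mul_self_eq, hyw, ← Int.cast_mul,
    ← Int.cast_sub, ← Int.cast_one]
  congr 1
  linear_combination hxy

section SkolemNoether
variable {D : Type*} [Ring D] [NoZeroDivisors D]

theorem eq_neg_of_add_mul_self_eq_zero {x y : D} (hsq : y * y = x * x) (h : (y + x) * x = 0) :
    y = -x := by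
  rcases mul_eq_zero.1 h with h | rfl
  · exact eq_neg_of_add_eq_zero_left h
  · rw [neg_zero, ← mul_self_eq_zero, hsq, mul_zero]

theorem exists_ne_zero_mul_eq_mul_of_mul_self_eq {x y z : D} (hsq : y * y = x * x) (hz : z ≠ 0)
    (hzx : z * x = -(x * z)) : ∃ β ≠ 0, β * x = y * β := by
  by_cases h : (y + x) * x = 0
  · refine ⟨z, hz, ?_⟩
    rw [hzx, eq_neg_of_add_mul_self_eq_zero hsq h, neg_mul]
  · refine ⟨(y + x) * x, h, ?_⟩
    simp only [add_mul, mul_add, ← mul_assoc, hsq]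
    abel

/-- With `β₁ * u₁ = v₁ * β₁`, the element `(v₂ * β₁ + β₁ * u₂) * u₂` intertwines both pairs;
when it vanishes, `v₂ * β₁ = -(β₁ * u₂)` and `β₁ * u₁` does. -/
theorem exists_ne_zero_mul_eq_mul_of_anticommute {u₁ u₂ v₁ v₂ : D} (hu₁ : u₁ ≠ 0)
    (hu₂ : u₂ ≠ 0) (hc : u₂ * u₂ ∈ Set.center D) (h₁ : v₁ * v₁ = u₁ * u₁)
    (h₂ : v₂ * v₂ = u₂ * u₂) (hu : u₂ * u₁ = -(u₁ * u₂)) (hv : v₂ * v₁ = -(v₁ * v₂)) :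
    ∃ β ≠ 0, β * u₁ = v₁ * β ∧ β * u₂ = v₂ * β := by
  obtain ⟨β₁, hβ₁, hβ₁u⟩ := exists_ne_zero_mul_eq_mul_of_mul_self_eq h₁ hu₂ hu
  by_cases h : (v₂ * β₁ + β₁ * u₂) * u₂ = 0
  · have hv₂ : v₂ * β₁ = -(β₁ * u₂) :=
      eq_neg_of_add_eq_zero_left ((mul_eq_zero.1 h).resolve_right hu₂)
    refine ⟨β₁ * u₁, mul_ne_zero hβ₁ hu₁, by rw [← mul_assoc, ← hβ₁u], ?_⟩
    calc β₁ * u₁ * u₂ = -(β₁ * (u₂ * u₁)) := by rw [hu]; noncomm_ring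
      _ = v₂ * (β₁ * u₁) := by rw [← mul_assoc v₂, hv₂, neg_mul, mul_assoc]
  · refine ⟨_, h, ?_, ?_⟩
    · have hu' (w : D) : u₂ * (u₁ * w) = -(u₁ * (u₂ * w)) := by
        rw [← mul_assoc, hu, neg_mul, mul_assoc]
      have hv' (w : D) : v₂ * (v₁ * w) = -(v₁ * (v₂ * w)) := by
        rw [← mul_assoc, hv, neg_mul, mul_assoc]
      have hβ₁u' (w : D) : β₁ * (u₁ * w) = v₁ * (β₁ * w) := by
        rw [← mul_assoc, hβ₁u, mul_assoc]
      simp only [add_mul, mul_add, mul_assoc, hu, hu', hv', hβ₁u', mul_neg, neg_neg]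
    · calc (v₂ * β₁ + β₁ * u₂) * u₂ * u₂ = v₂ * β₁ * (u₂ * u₂) + β₁ * u₂ * (u₂ * u₂) := by
            noncomm_ring
        _ = v₂ * β₁ * (u₂ * u₂) + v₂ * v₂ * (β₁ * u₂) := by
            rw [h₂, ((Set.mem_center_iff.1 hc).comm (β₁ * u₂)).eq]
        _ = v₂ * ((v₂ * β₁ + β₁ * u₂) * u₂) := by noncomm_ring

end SkolemNoether

namespace QuaternionAlgebra

section Field
variable {R : Type*} [Field R] [CharZero R] {c₁ c₂ : R} {μ : ℍ[R, c₁, c₂]}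

theorem imJ_eq_zero_and_imK_eq_zero_of_commute_i (hc₁ : c₁ ≠ 0) (h : Commute μ ⟨0, 1, 0, 0⟩) :
    μ.imJ = 0 ∧ μ.imK = 0 := by
  simpa [hc₁, self_eq_neg, neg_eq_self] using And.intro (congrArg imK h.eq) (congrArg imJ h.eq)

theorem imI_eq_zero_and_imK_eq_zero_of_commute_j (hc₂ : c₂ ≠ 0) (h : Commute μ ⟨0, 0, 1, 0⟩) :
    μ.imI = 0 ∧ μ.imK = 0 := by
  simpa [hc₂, self_eq_neg, neg_eq_self] using And.intro (congrArg imK h.eq) (congrArg imI h.eq)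

theorem imI_eq_zero_and_imJ_eq_zero_of_commute_k (hc₁ : c₁ ≠ 0) (hc₂ : c₂ ≠ 0)
    (h : Commute μ ⟨0, 0, 0, 1⟩) : μ.imI = 0 ∧ μ.imJ = 0 := by
  simpa [hc₁, hc₂, self_eq_neg, neg_eq_self] using
    And.intro (congrArg imJ h.eq) (congrArg imI h.eq)

end Field

theorem isUnit_of_neg_of_neg {R : Type*} [Field R] [LinearOrder R] [IsStrictOrderedRing R]
    {c₁ c₂ : R} (hc₁ : c₁ < 0) (hc₂ : c₂ < 0) {x : ℍ[R, c₁, c₂]} (hx : x ≠ 0) : IsUnit x := by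
  set n := (x * star x).re
  have hn0 : n ≠ 0 := by
    have hn : n = x.re ^ 2 + -c₁ * x.imI ^ 2 + -c₂ * x.imJ ^ 2 + c₁ * c₂ * x.imK ^ 2 := by
      simp only [n, re_mul, re_star, imI_star, imJ_star, imK_star]; ring
    have h₁ := mul_nonneg (neg_nonneg.2 hc₁.le) (sq_nonneg x.imI)
    have h₂ := mul_nonneg (neg_nonneg.2 hc₂.le) (sq_nonneg x.imJ)
    have h₃ := mul_nonneg (mul_pos_of_neg_of_neg hc₁ hc₂).le (sq_nonneg x.imK)
    intro h0
    apply hx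
    ext
    · exact pow_eq_zero_iff two_ne_zero |>.1 (by linarith [sq_nonneg x.re])
    · exact pow_eq_zero_iff two_ne_zero |>.1 <|
        (mul_eq_zero.1 (by linarith [sq_nonneg x.re] : -c₁ * x.imI ^ 2 = 0)).resolve_left
          (by linarith)
    · exact pow_eq_zero_iff two_ne_zero |>.1 <|
        (mul_eq_zero.1 (by linarith [sq_nonneg x.re] : -c₂ * x.imJ ^ 2 = 0)).resolve_left
          (by linarith)
    · exact pow_eq_zero_iff two_ne_zero |>.1 <|
        (mul_eq_zero.1 (by linarith [sq_nonneg x.re] : c₁ * c₂ * x.imK ^ 2 = 0)).resolve_left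
          (mul_pos_of_neg_of_neg hc₁ hc₂).ne'
  have hxx : x * star x = n := mul_star_eq_coe x
  refine ⟨⟨x, n⁻¹ • star x, ?_, ?_⟩, rfl⟩
  · rw [mul_smul_comm, hxx, smul_coe, inv_mul_cancel₀ hn0, coe_one]
  · rw [smul_mul_assoc, star_comm_self', hxx, smul_coe, inv_mul_cancel₀ hn0, coe_one]

variable {a b : ℚ}

noncomputable def toRealAlgHom (a b : ℚ) : ℍ[ℚ, a, b] →ₐ[ℚ] ℍ[ℝ, (a : ℝ), (b : ℝ)] where
  toFun := toReal a b
  map_one' := by ext <;> simp [toReal]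
  map_mul' x y := by ext <;> simp [toReal]
  map_zero' := by ext <;> simp [toReal]
  map_add' x y := by ext <;> simp [toReal]
  commutes' q := by ext <;> simp [toReal, Algebra.algebraMap_eq_smul_one]

theorem toRealAlgHom_injective : Function.Injective (toRealAlgHom a b) := fun x y h => by
  ext
  · simpa [toRealAlgHom, toReal] using congrArg re h
  · simpa [toRealAlgHom, toReal] using congrArg imI h
  · simpa [toRealAlgHom, toReal] using congrArg imJ h
  · simpa [toRealAlgHom, toReal] using congrArg imK h

noncomputable def conjToReal (α : (ℍ[ℝ, (a : ℝ), (b : ℝ)])ˣ) :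
    ℍ[ℚ, a, b] →ₐ[ℚ] ℍ[ℝ, (a : ℝ), (b : ℝ)] :=
  (MulSemiringAction.toAlgEquiv ℚ _ (ConjAct.toConjAct α)).toAlgHom.comp (toRealAlgHom a b)

theorem conjToReal_apply (α : (ℍ[ℝ, (a : ℝ), (b : ℝ)])ˣ) (x : ℍ[ℚ, a, b]) :
    conjToReal α x = α * toRealAlgHom a b x * ↑α⁻¹ :=
  rfl

def IsPurePosSquare (u : ℍ[ℚ, a, b]) : Prop :=
  star u = -u ∧ ∃ A : ℚ, 0 < A ∧ u * u = algebraMap ℚ _ A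

theorem IsPurePosSquare.ne_zero {u : ℍ[ℚ, a, b]} (hu : IsPurePosSquare u) : u ≠ 0 := by
  obtain ⟨-, A, hA, huA⟩ := hu
  rintro rfl
  exact hA.ne' (algebraMap_injective (by rw [← huA, mul_zero, map_zero]))

theorem not_isSquare_of_mul_self_eq [NoZeroDivisors ℍ[ℚ, a, b]] {u : ℍ[ℚ, a, b]}
    (hu : star u = -u) {A : ℚ} (hA : A ≠ 0) (huA : u * u = algebraMap ℚ _ A) : ¬IsSquare A := by
  rintro ⟨c, rfl⟩
  have hre : u.re = 0 := star_eq_neg.1 hu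
  have h : (u - algebraMap ℚ _ c) * (u + algebraMap ℚ _ c) = 0 := by
    rw [← (Algebra.commute_algebraMap_right c u).mul_self_sub_mul_self_eq', huA, map_mul,
      sub_self]
  have hc : c = 0 := by
    rcases mul_eq_zero.1 h with h | h
    · simpa [hre, algebraMap_eq, eq_comm] using congrArg re (sub_eq_zero.1 h)
    · simpa [hre, algebraMap_eq, eq_comm] using congrArg re (eq_neg_of_add_eq_zero_left h)
  exact hA (by rw [hc, mul_zero])

/-- `w := m • u` lies in `O` and squares to an integer `D = m² A` for a suitable `m ≠ 0`; a
solution of Pell's equation `x² - D y² = 1` gives the norm-one element `x + y w`. -/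
theorem exists_algebraMap_add_smul_mem_norm_one [NoZeroDivisors ℍ[ℚ, a, b]]
    (O : Subring ℍ[ℚ, a, b]) (hspan : Submodule.span ℚ (O : Set ℍ[ℚ, a, b]) = ⊤)
    {u : ℍ[ℚ, a, b]} (hu : IsPurePosSquare u) :
    ∃ t s : ℚ, s ≠ 0 ∧ algebraMap ℚ _ t + s • u ∈ O ∧
      (algebraMap ℚ _ t + s • u) * star (algebraMap ℚ _ t + s • u) = 1 := by
  obtain ⟨hstar, A, hA, huA⟩ := hu
  obtain ⟨n, hn, hnu⟩ :=
    O.toAddSubgroup.exists_zsmul_mem_of_mem_span_rat (hspan ▸ Submodule.mem_top (x := u))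
  set m : ℤ := n * A.den
  have hm : m ≠ 0 := mul_ne_zero hn (by exact_mod_cast A.den_nz)
  set D : ℤ := n ^ 2 * A.den * A.num
  have hDA : (D : ℚ) = m ^ 2 * A := by
    simp only [D, m]; push_cast; rw [← Rat.mul_den_eq_num]; ring
  have hwO : (m : ℚ) • u ∈ O := by
    rw [Int.cast_smul_eq_zsmul, show m = A.den * n from mul_comm _ _, mul_smul]
    exact zsmul_mem hnu _
  have hww : ((m : ℚ) • u) * ((m : ℚ) • u) = (D : ℍ[ℚ, a, b]) := by
    rw [smul_mul_smul_comm, huA, ← map_intCast (algebraMap ℚ ℍ[ℚ, a, b]), hDA, Algebra.smul_def,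
      ← map_mul]
    ring_nf
  have hD : 0 < D := by
    have : (0 : ℚ) < D := by rw [hDA]; positivity
    exact_mod_cast this
  have hDsq : ¬IsSquare D := fun hsq => not_isSquare_of_mul_self_eq hstar hA.ne' huA <| by
    rw [show A = D / (m : ℚ) ^ 2 by rw [hDA]; field_simp]
    exact (hsq.map (Int.castRingHom ℚ)).div (IsSquare.sq _)
  obtain ⟨x, y, hy, hxy⟩ := exists_intCast_add_mul_mul_star_eq_one
    (by rw [star_smul, hstar, smul_neg]) hD hDsq hww
  have hγ : algebraMap ℚ _ (x : ℚ) + ((y : ℚ) * m) • u = x + y * ((m : ℚ) • u) := by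
    rw [map_intCast, mul_smul, Int.cast_smul_eq_zsmul ℚ y, zsmul_eq_mul]
  refine ⟨x, y * m, by exact_mod_cast mul_ne_zero hy hm, ?_, ?_⟩ <;> rw [hγ]
  · exact O.add_mem (intCast_mem O x) (O.mul_mem (intCast_mem O y) hwO)
  · exact hxy

theorem exists_isPurePosSquare_anticommute (ha : a ≠ 0) (hb : b ≠ 0) (hpos : 0 < a ∨ 0 < b) :
    ∃ u₁ u₂ : ℍ[ℚ, a, b], IsPurePosSquare u₁ ∧ IsPurePosSquare u₂ ∧ u₂ * u₁ = -(u₁ * u₂) ∧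
      ∀ μ : ℍ[ℝ, (a : ℝ), (b : ℝ)],
        Commute μ (toReal a b u₁) → Commute μ (toReal a b u₂) → μ = μ.re := by
  have haR : (a : ℝ) ≠ 0 := by exact_mod_cast ha
  have hbR : (b : ℝ) ≠ 0 := by exact_mod_cast hb
  rcases ha.lt_or_gt with ha' | ha'
  · have hb' : 0 < b := hpos.resolve_left ha'.not_gt
    refine ⟨⟨0, 0, 1, 0⟩, ⟨0, 0, 0, 1⟩, ⟨by ext <;> simp, b, hb', by ext <;> simp [algebraMap_eq]⟩,
      ⟨by ext <;> simp, -(a * b), by nlinarith, by ext <;> simp [algebraMap_eq]⟩,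
      by ext <;> simp, fun μ h₁ h₂ => ?_⟩
    obtain ⟨hI, hK⟩ := imI_eq_zero_and_imK_eq_zero_of_commute_j hbR (by simpa [toReal] using h₁)
    obtain ⟨-, hJ⟩ := imI_eq_zero_and_imJ_eq_zero_of_commute_k haR hbR (by simpa [toReal] using h₂)
    ext <;> simp [hI, hJ, hK]
  rcases hb.lt_or_gt with hb' | hb'
  · refine ⟨⟨0, 1, 0, 0⟩, ⟨0, 0, 0, 1⟩, ⟨by ext <;> simp, a, ha', by ext <;> simp [algebraMap_eq]⟩,
      ⟨by ext <;> simp, -(a * b), by nlinarith, by ext <;> simp [algebraMap_eq]⟩,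
      by ext <;> simp, fun μ h₁ h₂ => ?_⟩
    obtain ⟨hJ, hK⟩ := imJ_eq_zero_and_imK_eq_zero_of_commute_i haR (by simpa [toReal] using h₁)
    obtain ⟨hI, -⟩ := imI_eq_zero_and_imJ_eq_zero_of_commute_k haR hbR (by simpa [toReal] using h₂)
    ext <;> simp [hI, hJ, hK]
  · refine ⟨⟨0, 1, 0, 0⟩, ⟨0, 0, 1, 0⟩, ⟨by ext <;> simp, a, ha', by ext <;> simp [algebraMap_eq]⟩,
      ⟨by ext <;> simp, b, hb', by ext <;> simp [algebraMap_eq]⟩,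
      by ext <;> simp, fun μ h₁ h₂ => ?_⟩
    obtain ⟨hJ, hK⟩ := imJ_eq_zero_and_imK_eq_zero_of_commute_i haR (by simpa [toReal] using h₁)
    obtain ⟨hI, -⟩ := imI_eq_zero_and_imK_eq_zero_of_commute_j hbR (by simpa [toReal] using h₂)
    ext <;> simp [hI, hJ, hK]

theorem conjToReal_mem_range_of_add_smul (α : (ℍ[ℝ, (a : ℝ), (b : ℝ)])ˣ) {t s : ℚ} (hs : s ≠ 0)
    {u : ℍ[ℚ, a, b]} (h : conjToReal α (algebraMap ℚ _ t + s • u) ∈ (toRealAlgHom a b).range) :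
    conjToReal α u ∈ (toRealAlgHom a b).range := by
  let T := (toRealAlgHom a b).range.comap (conjToReal α)
  have hu : u = s⁻¹ • ((algebraMap ℚ _ t + s • u) - algebraMap ℚ _ t) := by
    rw [add_sub_cancel_left, smul_smul, inv_mul_cancel₀ hs, one_smul]
  have : u ∈ T := hu ▸ T.smul_mem (T.sub_mem h (T.algebraMap_mem t)) _
  exact this

theorem exists_eq_smul_toReal_of_conjToReal_mem_range [NoZeroDivisors ℍ[ℚ, a, b]]
    (α : (ℍ[ℝ, (a : ℝ), (b : ℝ)])ˣ) {u₁ u₂ : ℍ[ℚ, a, b]} {A₁ A₂ : ℚ} (hu₁ : u₁ ≠ 0)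
    (hu₂ : u₂ ≠ 0) (h₁ : u₁ * u₁ = algebraMap ℚ _ A₁) (h₂ : u₂ * u₂ = algebraMap ℚ _ A₂)
    (h₁₂ : u₂ * u₁ = -(u₁ * u₂))
    (hcomm : ∀ μ : ℍ[ℝ, (a : ℝ), (b : ℝ)],
      Commute μ (toReal a b u₁) → Commute μ (toReal a b u₂) → μ = μ.re)
    (hα₁ : conjToReal α u₁ ∈ (toRealAlgHom a b).range)
    (hα₂ : conjToReal α u₂ ∈ (toRealAlgHom a b).range) :
    ∃ r : ℝ, r ≠ 0 ∧ ∃ β : ℍ[ℚ, a, b], β ≠ 0 ∧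
      (α : ℍ[ℝ, (a : ℝ), (b : ℝ)]) = r • toReal a b β := by
  set ι := toRealAlgHom a b
  obtain ⟨v₁, hv₁⟩ := (AlgHom.mem_range _).1 hα₁
  obtain ⟨v₂, hv₂⟩ := (AlgHom.mem_range _).1 hα₂
  have hv₁₁ : v₁ * v₁ = u₁ * u₁ := toRealAlgHom_injective <| by
    rw [map_mul, hv₁, ← map_mul, h₁, AlgHom.commutes, AlgHom.commutes]
  have hv₂₂ : v₂ * v₂ = u₂ * u₂ := toRealAlgHom_injective <| by
    rw [map_mul, hv₂, ← map_mul, h₂, AlgHom.commutes, AlgHom.commutes]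
  have hv₁₂ : v₂ * v₁ = -(v₁ * v₂) := toRealAlgHom_injective <| by
    rw [map_mul, map_neg, map_mul, hv₁, hv₂, ← map_mul, ← map_mul, h₁₂, map_neg]
  obtain ⟨β, hβ, hβ₁, hβ₂⟩ := exists_ne_zero_mul_eq_mul_of_anticommute hu₁ hu₂
    (h₂ ▸ Set.algebraMap_mem_center A₂) hv₁₁ hv₂₂ h₁₂ hv₁₂
  set μ := (↑α⁻¹ : ℍ[ℝ, (a : ℝ), (b : ℝ)]) * ι β
  have hμ {u v : ℍ[ℚ, a, b]} (hv : ι v = conjToReal α u) (hβv : β * u = v * β) :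
      Commute μ (ι u) := by
    have : ι β * ι u = α * ι u * ↑α⁻¹ * ι β := by
      rw [← map_mul, hβv, map_mul, hv, conjToReal_apply]
    simp only [Commute, SemiconjBy, μ, mul_assoc, this, Units.inv_mul_cancel_left]
  have hμre : μ = μ.re := hcomm μ (hμ hv₁ hβ₁) (hμ hv₂ hβ₂)
  have hβμ : ι β = μ.re • (α : ℍ[ℝ, (a : ℝ), (b : ℝ)]) := by
    rw [← mul_coe_eq_smul, ← hμre, Units.mul_inv_cancel_left]
  have hr : μ.re ≠ 0 := by
    rintro hr
    rw [hr, zero_smul, ← map_zero ι] at hβμ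
    exact hβ (toRealAlgHom_injective hβμ)
  refine ⟨μ.re⁻¹, inv_ne_zero hr, β, hβ, ?_⟩
  rw [show toReal a b β = ι β from rfl, hβμ, smul_smul, inv_mul_cancel₀ hr, one_smul]

end QuaternionAlgebra

open QuaternionAlgebra

theorem quaternion_normalizer_eq_smul_general (a b : ℚ) (ha : a ≠ 0) (hb : b ≠ 0)
    (hdiv : ∀ x : ℍ[ℚ, a, b], x ≠ 0 → IsUnit x)
    (hindef : ¬ ∀ x : ℍ[ℝ, (a : ℝ), (b : ℝ)], x ≠ 0 → IsUnit x)
    (O : Subring ℍ[ℚ, a, b])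
    (hspan : Submodule.span ℚ (O : Set ℍ[ℚ, a, b]) = ⊤)
    (Γ : Set ℍ[ℚ, a, b]) (hΓ : Γ = {γ : ℍ[ℚ, a, b] | γ ∈ O ∧ γ * star γ = 1})
    (α : (ℍ[ℝ, (a : ℝ), (b : ℝ)])ˣ)
    (hα : ∀ γ ∈ Γ, (α : ℍ[ℝ, (a : ℝ), (b : ℝ)]) * QuaternionAlgebra.toReal a b γ *
        ((α⁻¹ : _ˣ) : ℍ[ℝ, (a : ℝ), (b : ℝ)]) ∈ QuaternionAlgebra.toReal a b '' Γ ∧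
      ((α⁻¹ : _ˣ) : ℍ[ℝ, (a : ℝ), (b : ℝ)]) * QuaternionAlgebra.toReal a b γ *
        (α : ℍ[ℝ, (a : ℝ), (b : ℝ)]) ∈ QuaternionAlgebra.toReal a b '' Γ) :
    ∃ r : ℝ, r ≠ 0 ∧ ∃ β : ℍ[ℚ, a, b], β ≠ 0 ∧
      (α : ℍ[ℝ, (a : ℝ), (b : ℝ)]) = r • QuaternionAlgebra.toReal a b β := by
  let := DivisionRing.ofIsUnitOrEqZero fun x : ℍ[ℚ, a, b] => or_iff_not_imp_right.2 (hdiv x)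
  have hpos : 0 < a ∨ 0 < b := by
    by_contra! h
    exact hindef fun x => isUnit_of_neg_of_neg (by exact_mod_cast h.1.lt_of_ne ha)
      (by exact_mod_cast h.2.lt_of_ne hb)
  obtain ⟨u₁, u₂, h₁, h₂, h₁₂, hcomm⟩ := exists_isPurePosSquare_anticommute ha hb hpos
  have hconj {u : ℍ[ℚ, a, b]} (hu : IsPurePosSquare u) :
      conjToReal α u ∈ (toRealAlgHom a b).range := by
    obtain ⟨t, s, hs, hγO, hγ⟩ := exists_algebraMap_add_smul_mem_norm_one O hspan hu
    obtain ⟨γ', -, hγ'⟩ := (hα _ (by rw [hΓ]; exact ⟨hγO, hγ⟩)).1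
    exact conjToReal_mem_range_of_add_smul α hs ⟨γ', hγ'⟩
  obtain ⟨A₁, -, hA₁⟩ := h₁.2
  obtain ⟨A₂, -, hA₂⟩ := h₂.2
  exact exists_eq_smul_toReal_of_conjToReal_mem_range α h₁.ne_zero h₂.ne_zero hA₁ hA₂ h₁₂ hcomm
    (hconj h₁) (hconj h₂)

/-- Let `B = ℍ[ℚ, a, b]` (`a, b ≠ 0`) be an indefinite rational quaternion division
algebra, let `O ⊆ B` be an order with group of norm-one elements
`Γ = {γ ∈ O : γ * star γ = 1}`, and let `ι : B → ℍ[ℝ, a, b]` be the canonical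
embedding.  If a unit `α` of `ℍ[ℝ, a, b]` normalizes `ι(Γ)`, then `α = r • ι(β)` for
some nonzero real number `r` and some nonzero `β ∈ B`. -/
theorem quaternion_normalizer_eq_smul (a b : ℚ) (ha : a ≠ 0) (hb : b ≠ 0)
    (hdiv : ∀ x : ℍ[ℚ, a, b], x ≠ 0 → IsUnit x)
    (hindef : ¬ ∀ x : ℍ[ℝ, (a : ℝ), (b : ℝ)], x ≠ 0 → IsUnit x)
    (O : Subring ℍ[ℚ, a, b])
    (hfg : O.toAddSubgroup.FG)
    (hspan : Submodule.span ℚ (O : Set ℍ[ℚ, a, b]) = ⊤)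
    (Γ : Set ℍ[ℚ, a, b]) (hΓ : Γ = {γ : ℍ[ℚ, a, b] | γ ∈ O ∧ γ * star γ = 1})
    (α : (ℍ[ℝ, (a : ℝ), (b : ℝ)])ˣ)
    (hα : ∀ γ ∈ Γ, (α : ℍ[ℝ, (a : ℝ), (b : ℝ)]) * QuaternionAlgebra.toReal a b γ *
        ((α⁻¹ : _ˣ) : ℍ[ℝ, (a : ℝ), (b : ℝ)]) ∈ QuaternionAlgebra.toReal a b '' Γ ∧
      ((α⁻¹ : _ˣ) : ℍ[ℝ, (a : ℝ), (b : ℝ)]) * QuaternionAlgebra.toReal a b γ *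
        (α : ℍ[ℝ, (a : ℝ), (b : ℝ)]) ∈ QuaternionAlgebra.toReal a b '' Γ) :
    ∃ r : ℝ, r ≠ 0 ∧ ∃ β : ℍ[ℚ, a, b], β ≠ 0 ∧
      (α : ℍ[ℝ, (a : ℝ), (b : ℝ)]) = r • QuaternionAlgebra.toReal a b β :=
  quaternion_normalizer_eq_smul_general a b ha hb hdiv hindef O hspan Γ hΓ α hα
end
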